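/- arXiv:2304.10235 — 6 statements merged into one kernel-verified Lean document; each statement's English description precedes it below -/
import Mathlib

section
/- Let V be a pseudovariety of finite groups, G a group, and H a subgroup of G of finite index. If H is closed in the pro-V topology on G, then H is open in the pro-V topology on G. -/
/-! Let `𝒩` be the normal subgroups `K` with `G ⧸ K ∈ V`; it is closed under `⊓`, so the cosets
`gK` form a basis. If `H` is closed, every `g ∉ H` has such a coset `gK` disjoint from `H`. Pick
`K₀ ∈ 𝒩` whose image in the finite set `G ⧸ H` is minimal. For `k ∈ K₀ \ H`, the subgroup `K`
separating `k⁻¹` from `H` gives `K₀ ⊓ K ∈ 𝒩`, whose image misses the class of `k`; by minimality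
there is no such `k`, so `K₀ ≤ H` and `H` is a union of cosets of `K₀`. -/

universe u

open Topology

/-- The pro-`V` topology on a group `G`: the topology generated by the cosets of
the normal subgroups `K` of `G` with `G/K ∈ V`. -/
def proVTopology (G : Type u) [Group G] (V : (H : Type u) → [inst : Group H] → Prop) :
    TopologicalSpace G :=
  TopologicalSpace.generateFrom
    {S : Set G | ∃ (K : Subgroup G) (_ : K.Normal),
      V (G ⧸ K) ∧ ∃ g : G, S = (g * ·) '' (K : Set G)}

section CosetTopology

variable {G : Type*} [Group G]

def cosetTopology (𝒩 : Set (Subgroup G)) : TopologicalSpace G :=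
  TopologicalSpace.generateFrom {S : Set G | ∃ K ∈ 𝒩, ∃ g : G, S = (g * ·) '' (K : Set G)}

lemma image_mul_left_subset_of_mem {K : Subgroup G} {a g : G} (hg : g ∈ (a * ·) '' (K : Set G)) :
    (g * ·) '' (K : Set G) ⊆ (a * ·) '' (K : Set G) := by
  obtain ⟨k, hk, rfl⟩ := hg
  rintro _ ⟨k', hk', rfl⟩
  exact ⟨k * k', K.mul_mem hk hk', (mul_assoc a k k').symm⟩

lemma cosetTopology_empty : cosetTopology (∅ : Set (Subgroup G)) = ⊤ :=
  top_unique <| le_generateFrom fun _ ⟨_, hK, _⟩ => hK.elim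

variable {𝒩 : Set (Subgroup G)}

lemma isOpen_cosetTopology_iff (hne : 𝒩.Nonempty) (hinf : ∀ K₁ ∈ 𝒩, ∀ K₂ ∈ 𝒩, K₁ ⊓ K₂ ∈ 𝒩)
    {U : Set G} : IsOpen[cosetTopology 𝒩] U ↔ ∀ g ∈ U, ∃ K ∈ 𝒩, (g * ·) '' (K : Set G) ⊆ U := by
  refine ⟨fun hU => ?_, fun h => ?_⟩
  · induction hU with
    | basic S hS =>
      obtain ⟨K, hK, a, rfl⟩ := hS
      exact fun g hg => ⟨K, hK, image_mul_left_subset_of_mem hg⟩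
    | univ =>
      obtain ⟨K, hK⟩ := hne
      exact fun _ _ => ⟨K, hK, Set.subset_univ _⟩
    | inter U₁ U₂ _ _ ih₁ ih₂ =>
      intro g hg
      obtain ⟨K₁, hK₁, h₁⟩ := ih₁ g hg.1
      obtain ⟨K₂, hK₂, h₂⟩ := ih₂ g hg.2
      exact ⟨K₁ ⊓ K₂, hinf K₁ hK₁ K₂ hK₂, Set.subset_inter
        ((Set.image_mono inf_le_left).trans h₁) ((Set.image_mono inf_le_right).trans h₂)⟩
    | sUnion 𝒰 _ ih =>
      rintro g ⟨U, hU, hgU⟩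
      obtain ⟨K, hK, hKU⟩ := ih U hU g hgU
      exact ⟨K, hK, hKU.trans (Set.subset_sUnion_of_mem hU)⟩
  · refine (@isOpen_iff_forall_mem_open _ (cosetTopology 𝒩) _).mpr fun g hg => ?_
    obtain ⟨K, hK, hKU⟩ := h g hg
    exact ⟨_, hKU, TopologicalSpace.isOpen_generateFrom_of_mem ⟨K, hK, g, rfl⟩,
      1, K.one_mem, mul_one g⟩

lemma Subgroup.exists_mem_le_of_index_ne_zero (hne : 𝒩.Nonempty)
    (hinf : ∀ K₁ ∈ 𝒩, ∀ K₂ ∈ 𝒩, K₁ ⊓ K₂ ∈ 𝒩) {H : Subgroup G} (hH : H.index ≠ 0)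
    (hsep : ∀ g ∉ H, ∃ K ∈ 𝒩, ∀ k ∈ K, g * k ∉ H) : ∃ K ∈ 𝒩, K ≤ H := by
  have := Subgroup.index_ne_zero_iff_finite.mp hH
  obtain ⟨K₀, hK₀, hmin⟩ := exists_minimalFor_of_wellFoundedLT (· ∈ 𝒩)
    (fun K : Subgroup G => (QuotientGroup.mk '' (K : Set G) : Set (G ⧸ H))) hne
  refine ⟨K₀, hK₀, fun k hk => by_contra fun hkH => ?_⟩
  obtain ⟨K, hK, hsepK⟩ := hsep k⁻¹ (H.inv_mem_iff.not.mpr hkH)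
  obtain ⟨k', hk', hkk'⟩ := hmin (hinf K₀ hK₀ K hK) (Set.image_mono inf_le_left) ⟨k, hk, rfl⟩
  exact hsepK k' hk'.2 (QuotientGroup.eq.mp hkk'.symm)

lemma isOpen_cosetTopology_of_isClosed_of_index_ne_zero
    (hinf : ∀ K₁ ∈ 𝒩, ∀ K₂ ∈ 𝒩, K₁ ⊓ K₂ ∈ 𝒩) {H : Subgroup G} (hH : H.index ≠ 0)
    (hclosed : IsClosed[cosetTopology 𝒩] (H : Set G)) : IsOpen[cosetTopology 𝒩] (H : Set G) := by
  rcases 𝒩.eq_empty_or_nonempty with rfl | hne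
  · rw [cosetTopology_empty] at hclosed ⊢
    rcases (TopologicalSpace.isOpen_top_iff _).mp hclosed.isOpen_compl with hcompl | hcompl
    · rw [Set.compl_empty_iff.mp hcompl]
      exact @isOpen_univ _ ⊤
    · exact (Set.eq_univ_iff_forall.mp hcompl 1 H.one_mem).elim
  have hsep : ∀ g ∉ H, ∃ K ∈ 𝒩, ∀ k ∈ K, g * k ∉ H := fun g hg => by
    obtain ⟨K, hK, hKH⟩ := (isOpen_cosetTopology_iff hne hinf).mp hclosed.isOpen_compl g hg
    exact ⟨K, hK, fun k hk => hKH ⟨k, hk, rfl⟩⟩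
  obtain ⟨K, hK, hKH⟩ := Subgroup.exists_mem_le_of_index_ne_zero hne hinf hH hsep
  refine (isOpen_cosetTopology_iff hne hinf).mpr fun h hh => ⟨K, hK, ?_⟩
  rintro _ ⟨k, hk, rfl⟩
  exact H.mul_mem hh (hKH hk)

end CosetTopology

section ProV

variable {G : Type u} [Group G] {V : (H : Type u) → [Group H] → Prop}

variable (G V) in
def proVKernels : Set (Subgroup G) :=
  {K | ∃ _ : K.Normal, V (G ⧸ K)}

lemma proVTopology_eq_cosetTopology : proVTopology G V = cosetTopology (proVKernels G V) := by
  simp only [proVTopology, cosetTopology, proVKernels, Set.mem_ofPred_eq, exists_and_right]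

lemma inf_mem_proVKernels (hsub : ∀ (H : Type u) [Group H] (K : Subgroup H), V H → V K)
    (hquot : ∀ (H K : Type u) [Group H] [Group K] (f : H →* K),
      Function.Surjective f → V H → V K)
    (hprod : ∀ (H K : Type u) [Group H] [Group K], V H → V K → V (H × K))
    {K₁ K₂ : Subgroup G} (h₁ : K₁ ∈ proVKernels G V) (h₂ : K₂ ∈ proVKernels G V) :
    K₁ ⊓ K₂ ∈ proVKernels G V := by
  obtain ⟨_, v₁⟩ := h₁
  obtain ⟨_, v₂⟩ := h₂
  let f : G →* (G ⧸ K₁) × (G ⧸ K₂) := (QuotientGroup.mk' K₁).prod (QuotientGroup.mk' K₂)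
  have hker : f.ker = K₁ ⊓ K₂ := by
    rw [MonoidHom.ker_prod, QuotientGroup.ker_mk', QuotientGroup.ker_mk']
  have hrange : V f.range := hsub _ f.range (hprod _ _ v₁ v₂)
  let e : f.range ≃* G ⧸ (K₁ ⊓ K₂) :=
    (QuotientGroup.quotientKerEquivRange f).symm.trans (QuotientGroup.quotientMulEquivOfEq hker)
  exact ⟨inferInstance, hquot _ _ e.toMonoidHom e.surjective hrange⟩

end ProV

theorem closed_finite_index_subgroup_isOpen_proV_general (G : Type u) [Group G]
    (V : (H : Type u) → [inst : Group H] → Prop)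
    (hsub : ∀ (H : Type u) [Group H] (K : Subgroup H), V H → V K)
    (hquot : ∀ (H K : Type u) [Group H] [Group K] (f : H →* K),
      Function.Surjective f → V H → V K)
    (hprod : ∀ (H K : Type u) [Group H] [Group K], V H → V K → V (H × K))
    (H : Subgroup G) (hindex : H.index ≠ 0)
    (hclosed : IsClosed[proVTopology G V] (H : Set G)) :
    IsOpen[proVTopology G V] (H : Set G) := by
  rw [proVTopology_eq_cosetTopology] at hclosed ⊢
  exact isOpen_cosetTopology_of_isClosed_of_index_ne_zero
    (fun _ h₁ _ h₂ => inf_mem_proVKernels hsub hquot hprod h₁ h₂) hindex hclosed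

/-- For a pseudovariety `V` of finite groups, a finite-index
subgroup of a group `G` that is closed in the pro-`V` topology is open in the
pro-`V` topology. -/
theorem closed_finite_index_subgroup_isOpen_proV (G : Type u) [Group G]
    (V : (H : Type u) → [inst : Group H] → Prop)
    (hfin : ∀ (H : Type u) [Group H], V H → Finite H)
    (hsub : ∀ (H : Type u) [Group H] (K : Subgroup H), V H → V K)
    (hquot : ∀ (H K : Type u) [Group H] [Group K] (f : H →* K),
      Function.Surjective f → V H → V K)
    (hprod : ∀ (H K : Type u) [Group H] [Group K], V H → V K → V (H × K))
    (H : Subgroup G) (hindex : H.index ≠ 0)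
    (hclosed : IsClosed[proVTopology G V] (H : Set G)) :
    IsOpen[proVTopology G V] (H : Set G) :=
  closed_finite_index_subgroup_isOpen_proV_general G V hsub hquot hprod H hindex hclosed
end

section
/- Let F be a free group with basis A = {a, b}, and let H be the subgroup generated by a together with all elements b^k a^k b a b^{-k} for k ≥ 1. Then for every finite-index normal subgroup N of F, one has HN = F; i.e., H is dense in the profinite topology on F. -/
open Pointwise

/-- In the free group `F` on `{a, b}`, the subgroup
`H = ⟨a, bᵏaᵏbab⁻ᵏ (k ≥ 1)⟩` satisfies `HN = F` for every finite-index normal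
subgroup `N` of `F`; i.e. `H` is dense in the profinite topology. -/
theorem subgroup_dense_profinite_example
    (a b : FreeGroup (Fin 2)) (ha : a = FreeGroup.of 0) (hb : b = FreeGroup.of 1)
    (H : Subgroup (FreeGroup (Fin 2)))
    (hH : H = Subgroup.closure
      ({a} ∪ {x | ∃ k : ℕ, 1 ≤ k ∧ x = b ^ k * a ^ k * b * a * (b ^ k)⁻¹})) :
    ∀ N : Subgroup (FreeGroup (Fin 2)), N.Normal → N.index ≠ 0 →
      (H : Set (FreeGroup (Fin 2))) * (N : Set (FreeGroup (Fin 2))) = Set.univ := by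
  intro N hN hidx
  haveI := hN
  haveI : N.FiniteIndex := ⟨hidx⟩
  rw [← Subgroup.mul_normal H N]
  suffices h : H ⊔ N = ⊤ by rw [h]; rfl
  set K := H ⊔ N with hK
  have haH : a ∈ H := by
    rw [hH]; exact Subgroup.subset_closure (Or.inl rfl)
  have haK : a ∈ K := Subgroup.mem_sup_left haH
  set n := N.index with hn
  have hn1 : 1 ≤ n := Nat.one_le_iff_ne_zero.2 hidx
  have hbnN : b ^ n ∈ N := N.pow_index_mem b
  have hgH : b ^ n * a ^ n * b * a * (b ^ n)⁻¹ ∈ H := by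
    rw [hH]; exact Subgroup.subset_closure (Or.inr ⟨n, hn1, rfl⟩)
  have hbK : b ∈ K := by
    have : a⁻¹ ^ n * (b ^ n)⁻¹ * (b ^ n * a ^ n * b * a * (b ^ n)⁻¹) * b ^ n * a⁻¹ = b := by
      group
    rw [← this]
    exact mul_mem (mul_mem (mul_mem (mul_mem
      (Subgroup.mem_sup_left (pow_mem (inv_mem haH) n))
      (Subgroup.mem_sup_right (inv_mem hbnN)))
      (Subgroup.mem_sup_left hgH))
      (Subgroup.mem_sup_right hbnN))
      (Subgroup.mem_sup_left (inv_mem haH))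
  rw [eq_top_iff, ← FreeGroup.closure_range_of (Fin 2), Subgroup.closure_le]
  rintro x ⟨i, rfl⟩
  fin_cases i
  · simpa using ha ▸ haK
  · simpa using hb ▸ hbK
end

section
/- Let F be a free group of rank 2 with basis {a,b} and let H be the subgroup generated by a and the elements b^k a^k b a b^{-k} for k ≥ 1. Then b ∉ H, hence H is a proper subgroup of F. -/
/-!
Let `F` act on the disjoint union of the cycles `ℤ/(|n|+1)`, `n : ℤ`: `a` rotates every cycle,
and `b` moves the points `ray n = ⟨n, 0⟩` along the ray `n ↦ n + 1` and fixes all other points.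
The cycle over `0` has length one, so `a` fixes `ray 0`. For `k ≥ 1`, `b⁻ᵏ` carries `ray 0` to
`ray (-k)`; there `a` steps to the point `1` of the cycle of length `k + 1`, which `b` fixes, and
`aᵏ` completes the cycle, after which `bᵏ` returns to `ray 0`. Hence `H` lies in the stabiliser
of `ray 0`, but `b` does not.
-/

abbrev CycleRay : Type := Σ n : ℤ, ZMod (n.natAbs + 1)

namespace CycleRay

open Equiv

def ray (n : ℤ) : CycleRay := ⟨n, 0⟩

def rotate : Perm CycleRay := sigmaCongrRight fun _ => Equiv.addRight 1

def raySection : ℤ ≃ {x : CycleRay // x.2 = 0} where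
  toFun n := ⟨ray n, rfl⟩
  invFun x := x.1.1
  left_inv _ := rfl
  right_inv := by rintro ⟨⟨n, i⟩, hi⟩; obtain rfl : i = 0 := hi; rfl

def shift : Perm CycleRay := Perm.ofSubtype (raySection.permCongr (Equiv.addRight 1))

lemma rotate_pow_apply (m : ℕ) (x : CycleRay) : (rotate ^ m) x = ⟨x.1, x.2 + m⟩ := by
  induction m with
  | zero => simp
  | succ m ih => rw [pow_succ', Perm.mul_apply, ih]; simp [rotate, add_assoc]

lemma rotate_pow_natAbs_succ_apply (x : CycleRay) : (rotate ^ (x.1.natAbs + 1)) x = x := by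
  rw [rotate_pow_apply, ZMod.natCast_self, add_zero]

lemma rotate_ray_zero : rotate (ray 0) = ray 0 :=
  pow_one rotate ▸ rotate_pow_natAbs_succ_apply (ray 0)

lemma shift_ray (n : ℤ) : shift (ray n) = ray (n + 1) := by
  rw [shift, Perm.ofSubtype_apply_of_mem (p := fun x : CycleRay => x.2 = 0) (a := ray n) _ rfl]
  rfl

lemma shift_apply_of_ne_zero {x : CycleRay} (hx : x.2 ≠ 0) : shift x = x :=
  Perm.ofSubtype_apply_of_not_mem _ hx

lemma shift_pow_ray (m : ℕ) (n : ℤ) : (shift ^ m) (ray n) = ray (n + m) := by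
  induction m generalizing n with
  | zero => simp
  | succ m ih =>
    rw [pow_succ, Perm.mul_apply, shift_ray, ih, Nat.cast_succ, add_comm (m : ℤ), add_assoc]

lemma shift_pow_inv_ray (m : ℕ) (n : ℤ) : (shift ^ m)⁻¹ (ray n) = ray (n - m) := by
  rw [Perm.inv_eq_iff_eq, shift_pow_ray, sub_add_cancel]

lemma rotate_pow_mul_shift_mul_rotate_ray {n : ℤ} (hn : n ≠ 0) :
    (rotate ^ n.natAbs * shift * rotate) (ray n) = ray n := by
  have : Fact (1 < n.natAbs + 1) := ⟨by omega⟩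
  have hfix : shift (rotate (ray n)) = rotate (ray n) :=
    shift_apply_of_ne_zero <| show (0 + 1 : ZMod (n.natAbs + 1)) ≠ 0 by
      rw [zero_add]; exact one_ne_zero
  rw [Perm.mul_apply, Perm.mul_apply, hfix, ← Perm.mul_apply, ← pow_succ]
  exact rotate_pow_natAbs_succ_apply (ray n)

lemma shift_pow_conj_apply_ray_zero {k : ℕ} (hk : k ≠ 0) :
    (shift ^ k * rotate ^ k * shift * rotate * (shift ^ k)⁻¹) (ray 0) = ray 0 := by
  have hloop := rotate_pow_mul_shift_mul_rotate_ray (n := -k) (by omega)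
  rw [Int.natAbs_neg, Int.natAbs_natCast] at hloop
  simp only [Perm.mul_apply] at hloop ⊢
  rw [shift_pow_inv_ray, zero_sub, hloop, shift_pow_ray, neg_add_cancel]

lemma shift_ray_ne (n : ℤ) : shift (ray n) ≠ ray n := by
  rw [shift_ray]
  intro h
  simpa [ray] using congrArg Sigma.fst h

end CycleRay

lemma Subgroup.notMem_closure_of_apply_eq {G α : Type*} [Group G] (φ : G →* Equiv.Perm α)
    {S : Set G} {x : α} (hS : ∀ s ∈ S, φ s x = x) {g : G} (hg : φ g x ≠ x) :
    g ∉ Subgroup.closure S := fun hmem =>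
  hg ((Subgroup.closure_le (K := (MulAction.stabilizer (Equiv.Perm α) x).comap φ)).2 hS hmem)

open CycleRay in
/-- In the free group `F` on `{a, b}`, the subgroup
`H = ⟨a, bᵏaᵏbab⁻ᵏ (k ≥ 1)⟩` does not contain `b`; hence `H` is proper. -/
theorem b_not_mem_subgroup_example
    (a b : FreeGroup (Fin 2)) (ha : a = FreeGroup.of 0) (hb : b = FreeGroup.of 1)
    (H : Subgroup (FreeGroup (Fin 2)))
    (hH : H = Subgroup.closure
      ({a} ∪ {x | ∃ k : ℕ, 1 ≤ k ∧ x = b ^ k * a ^ k * b * a * (b ^ k)⁻¹})) :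
    b ∉ H ∧ H ≠ ⊤ := by
  let φ := FreeGroup.lift ![rotate, shift]
  have hφa : φ a = rotate := by rw [ha, FreeGroup.lift_apply_of]; rfl
  have hφb : φ b = shift := by rw [hb, FreeGroup.lift_apply_of]; rfl
  have hbH : b ∉ H := by
    rw [hH]
    refine Subgroup.notMem_closure_of_apply_eq φ (x := ray 0) ?_ (hφb ▸ shift_ray_ne 0)
    rintro s (rfl | ⟨k, hk, rfl⟩)
    · rw [hφa, rotate_ray_zero]
    · simp only [map_mul, map_pow, map_inv, hφa, hφb]
      exact shift_pow_conj_apply_ray_zero (by omega)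
  exact ⟨hbH, fun htop => hbH (htop ▸ Subgroup.mem_top b)⟩
end

section
/- Every finitely generated subgroup of a free abelian group (of arbitrary rank) is closed in the profinite topology; i.e., free abelian groups are LERF. -/
/-!
Given a finitely generated `H ≤ ⊕_A ℤ` and `x ∉ H`, all of them live on a finite set `B` of
coordinates, and restriction to `B` is injective on everything supported there. So in `ℤ^B`
the image of `H` misses the image of `x`, and `ℤ^B ⧸ H` is a finitely generated abelian group,
hence residually finite by the structure theorem. A finite quotient separating `x` from `H`
pulls back to a finite-index subgroup containing `H` but not `x`, whose cosets are basic open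
sets.
-/

open Topology

/-- The profinite topology on an additive group `G`: generated by the cosets of
the finite-index (normal) additive subgroups. -/
def profiniteTopologyAdd (G : Type*) [AddGroup G] : TopologicalSpace G :=
  TopologicalSpace.generateFrom
    {S : Set G | ∃ K : AddSubgroup G, K.Normal ∧ K.index ≠ 0 ∧
      ∃ g : G, S = (g + ·) '' (K : Set G)}

theorem AddGroup.ResiduallyFinite.of_injective {G G' : Type*} [AddGroup G] [AddGroup G']
    [AddGroup.ResiduallyFinite G'] {f : G →+ G'} (hf : Function.Injective f) :
    AddGroup.ResiduallyFinite G := by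
  refine AddGroup.residuallyFinite_iff_exists_finiteIndexNormalAddSubgroup.mpr fun g hg => ?_
  obtain ⟨K, hK⟩ := exists_finiteIndexNormalAddSubgroup_notMem (f g)
    ((map_ne_zero_iff f hf).mpr hg)
  exact ⟨K.comap f, hK⟩

instance Finsupp.residuallyFinite_int (ι : Type*) : AddGroup.ResiduallyFinite (ι →₀ ℤ) := by
  refine AddGroup.residuallyFinite_of_forall_exists_finite_addMonoidHom fun v hv => ?_
  obtain ⟨j, hj⟩ := Finsupp.ne_iff.mp hv
  -- `v j` survives reduction modulo `|v j| + 1`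
  let n := (v j).natAbs + 1
  refine ⟨ZMod n, inferInstance, inferInstance,
    (Int.castAddHom (ZMod n)).comp (Finsupp.applyAddHom j), fun hvj => ?_⟩
  have hdvd : n ∣ (v j).natAbs :=
    Int.natCast_dvd.mp ((ZMod.intCast_zmod_eq_zero_iff_dvd _ _).mp hvj)
  have := Nat.le_of_dvd (Int.natAbs_pos.mpr hj) hdvd
  omega

instance AddCommGroup.residuallyFinite_of_fg (Q : Type*) [AddCommGroup Q] [AddGroup.FG Q] :
    AddGroup.ResiduallyFinite Q := by
  obtain ⟨n, ι, _, p, hp, e, ⟨φ⟩⟩ := AddCommGroup.equiv_free_prod_directSum_zmod Q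
  have : ∀ i, NeZero (p i ^ e i) := fun i => ⟨pow_ne_zero _ (hp i).ne_zero⟩
  have : Finite (DirectSum ι fun i => ZMod (p i ^ e i)) :=
    Finite.of_injective _ DFunLike.coe_injective
  exact .of_injective (f := φ.toAddMonoidHom) φ.injective

def AddSubgroup.IsSeparable {G : Type*} [AddGroup G] (H : AddSubgroup G) : Prop :=
  ∀ x ∉ H, ∃ K : FiniteIndexNormalAddSubgroup G, H ≤ K.toAddSubgroup ∧ x ∉ K

namespace AddSubgroup

variable {G : Type*} [AddGroup G]

theorem IsSeparable.comap {Q : Type*} [AddGroup Q] {H : AddSubgroup Q} (hH : H.IsSeparable)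
    (φ : G →+ Q) : (H.comap φ).IsSeparable := fun x hx => by
  obtain ⟨K, hHK, hxK⟩ := hH (φ x) hx
  exact ⟨K.comap φ, fun y hy => hHK hy, hxK⟩

theorem isSeparable_of_residuallyFinite_quotient (H : AddSubgroup G) [H.Normal]
    [AddGroup.ResiduallyFinite (G ⧸ H)] : H.IsSeparable := fun x hx => by
  obtain ⟨K, hK⟩ := AddGroup.exists_finiteIndexNormalAddSubgroup_notMem (x : G ⧸ H)
    (by rwa [Ne, QuotientAddGroup.eq_zero_iff])
  refine ⟨K.comap (QuotientAddGroup.mk' H), fun h hh => ?_, hK⟩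
  show (h : G ⧸ H) ∈ K
  rw [(QuotientAddGroup.eq_zero_iff h).mpr hh]
  exact zero_mem K

theorem isSeparable_of_fg {Q : Type*} [AddCommGroup Q] [AddGroup.FG Q] (H : AddSubgroup Q) :
    H.IsSeparable :=
  H.isSeparable_of_residuallyFinite_quotient

theorem IsSeparable.isClosed {H : AddSubgroup G} (hH : H.IsSeparable) :
    IsClosed[profiniteTopologyAdd G] (H : Set G) := by
  let := profiniteTopologyAdd G
  refine isOpen_compl_iff.mp (isOpen_iff_forall_mem_open.mpr fun x hx => ?_)
  obtain ⟨K, hHK, hxK⟩ := hH x hx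
  refine ⟨(x + ·) '' (K : Set G), ?_, ?_, ⟨0, K.zero_mem, add_zero x⟩⟩
  · rintro _ ⟨k, hk, rfl⟩ hxk
    exact hxK (by simpa using sub_mem (show x + k ∈ K from hHK hxk) hk)
  · exact TopologicalSpace.isOpen_generateFrom_of_mem
      ⟨K.toAddSubgroup, inferInstance, AddSubgroup.FiniteIndex.index_ne_zero, x, rfl⟩

end AddSubgroup

theorem Finsupp.exists_finset_le_supported_of_fg {ι M : Type*} [AddCommGroup M]
    {H : AddSubgroup (ι →₀ M)} (hH : H.FG) :
    ∃ B : Finset ι, H ≤ (Finsupp.supported M ℤ (B : Set ι)).toAddSubgroup := by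
  classical
  obtain ⟨s, rfl⟩ := hH
  refine ⟨s.biUnion Finsupp.support, (AddSubgroup.closure_le _).mpr fun f hf => ?_⟩
  exact (Finsupp.mem_supported ℤ f).mpr
    (Finset.coe_subset.mpr (Finset.subset_biUnion_of_mem Finsupp.support hf))

theorem Finsupp.isSeparable_of_fg {ι : Type*} {H : AddSubgroup (ι →₀ ℤ)} (hH : H.FG) :
    H.IsSeparable := fun x hx => by
  classical
  obtain ⟨B, hB⟩ := Finsupp.exists_finset_le_supported_of_fg hH
  let φ := Finsupp.subtypeDomainAddMonoidHom (M := ℤ) (p := (· ∈ B ∪ x.support))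
  have : AddGroup.FG ({i // i ∈ B ∪ x.support} →₀ ℤ) :=
    Module.Finite.iff_addGroup_fg.mp inferInstance
  have hx' : x ∉ (H.map φ).comap φ := by
    rintro ⟨h, hh, hφ⟩
    have hhx : h = x := (Finsupp.subtypeDomain_eq_iff
      (fun i hi => Finset.mem_union_left _ (hB hh hi))
      (fun i hi => Finset.mem_union_right _ hi)).mp hφ
    exact hx (hhx ▸ hh)
  obtain ⟨K, hHK, hxK⟩ := ((H.map φ).isSeparable_of_fg.comap φ) x hx'
  exact ⟨K, (AddSubgroup.le_comap_map φ H).trans hHK, hxK⟩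

/-- Free abelian groups are LERF: every finitely generated
subgroup of `⊕_{a ∈ A} ℤ` is closed in the profinite topology. -/
theorem free_abelian_LERF (A : Type*) (H : AddSubgroup (A →₀ ℤ)) (hfg : H.FG) :
    IsClosed[profiniteTopologyAdd (A →₀ ℤ)] (H : Set (A →₀ ℤ)) :=
  (Finsupp.isSeparable_of_fg hfg).isClosed
end

section
/- Let F be a free group, m ≥ 1, and H a subgroup of F. If H is dense in the pro-Ab(p) topology on F for every prime p dividing m, then H is dense in the pro-Ab(m) topology on F. -/
/-!
Suppose `HN ≠ F` for some `N` open in the pro-`Ab(m)` topology. Then `K = HN` is a proper normal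
subgroup of finite index containing `[F, F]` and all `m`-th powers, so `F/K` is a nontrivial finite
abelian group of exponent dividing `m`. By Cauchy's theorem it has an element of some prime order
`p`, so `p ∣ m` and the `p`-th power map of `F/K` is not injective, hence not surjective. The
preimage `M` of `(F/K)^p` is then a proper pro-`Ab(p)` open subgroup containing `H`, so
`HM = M ≠ F` and `H` is not `Ab(p)`-dense.
-/

open Pointwise

/-- `H` is dense in the pro-`Ab(k)` topology on the free group on `A`:
`HN = F` for every normal subgroup `N` such that `F/N` is a finite abelian
group of exponent dividing `k`. -/
def AbmDense (A : Type*) (k : ℕ) (H : Subgroup (FreeGroup A)) : Prop :=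
  ∀ N : Subgroup (FreeGroup A), N.Normal → N.index ≠ 0 →
    commutator (FreeGroup A) ≤ N → (∀ g : FreeGroup A, g ^ k ∈ N) →
      (H : Set (FreeGroup A)) * (N : Set (FreeGroup A)) = Set.univ

theorem Subgroup.mul_normal_eq_univ_iff {G : Type*} [Group G] (H N : Subgroup G) [N.Normal] :
    (H : Set G) * (N : Set G) = Set.univ ↔ H ⊔ N = ⊤ := by
  rw [← Subgroup.mul_normal, ← Subgroup.coe_top, SetLike.coe_set_eq]

theorem range_powMonoidHom_ne_top_of_orderOf_eq {Q : Type*} [CommGroup Q] [Finite Q] {x : Q}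
    {p : ℕ} (hx : orderOf x = p) (hp : p ≠ 1) : (powMonoidHom p : Q →* Q).range ≠ ⊤ := by
  intro htop
  have hinj : Function.Injective (powMonoidHom p : Q →* Q) :=
    Finite.injective_iff_surjective.mpr (MonoidHom.range_eq_top.mp htop)
  have hx1 : x = 1 := hinj (by simp [← hx, pow_orderOf_eq_one])
  exact hp (by rw [← hx, hx1, orderOf_one])

open scoped IsMulCommutative in
theorem Subgroup.exists_prime_le_ne_top_normal_pow_mem {G : Type*} [Group G] {K : Subgroup G}
    {m : ℕ} (hcomm : _root_.commutator G ≤ K) (hK : K.index ≠ 0) (hKtop : K ≠ ⊤)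
    (hpow : ∀ g : G, g ^ m ∈ K) :
    ∃ p : ℕ, p.Prime ∧ p ∣ m ∧
      ∃ M : Subgroup G, K ≤ M ∧ M ≠ ⊤ ∧ M.Normal ∧ ∀ g : G, g ^ p ∈ M := by
  have : K.Normal := .of_commutator_le (h := hcomm)
  have : IsMulCommutative (G ⧸ K) := Normal.quotient_commutative_iff_commutator_le.mpr hcomm
  have : K.FiniteIndex := ⟨hK⟩
  have : Nontrivial (G ⧸ K) := QuotientGroup.nontrivial_iff.mpr hKtop
  obtain ⟨p, hp, hp_dvd_card⟩ := Nat.exists_prime_and_dvd (Finite.one_lt_card (α := G ⧸ K)).ne'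
  have : Fact p.Prime := ⟨hp⟩
  obtain ⟨x, hx⟩ := exists_prime_orderOf_dvd_card' p hp_dvd_card
  refine ⟨p, hp, ?_, (powMonoidHom p).range.comap (QuotientGroup.mk' K), ?_, ?_, ?_, ?_⟩
  · obtain ⟨g, rfl⟩ := QuotientGroup.mk_surjective x
    rw [← hx]
    exact orderOf_dvd_of_pow_eq_one ((QuotientGroup.eq_one_iff _).mpr (hpow g))
  · intro g hg
    exact ⟨1, by simp [(QuotientGroup.eq_one_iff g).mpr hg]⟩
  · rw [Ne, ← comap_top (QuotientGroup.mk' K),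
      (comap_injective (QuotientGroup.mk'_surjective K)).eq_iff]
    exact range_powMonoidHom_ne_top_of_orderOf_eq hx hp.ne_one
  · exact (normal_of_isMulCommutative _).comap _
  · exact fun g => ⟨QuotientGroup.mk' K g, rfl⟩

theorem abp_dense_imp_abm_dense_general (A : Type*) (m : ℕ)
    (H : Subgroup (FreeGroup A))
    (hdense : ∀ p : ℕ, p.Prime → p ∣ m → AbmDense A p H) :
    AbmDense A m H := by
  intro N hN hN_index hN_comm hN_pow
  rw [H.mul_normal_eq_univ_iff N]
  by_contra hK
  obtain ⟨p, hp, hpm, M, hKM, hM_ne_top, hM, hM_pow⟩ :=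
    Subgroup.exists_prime_le_ne_top_normal_pow_mem (hN_comm.trans le_sup_right)
      (ne_zero_of_dvd_ne_zero hN_index (Subgroup.index_dvd_of_le le_sup_right)) hK
      fun g => le_sup_right (a := H) (hN_pow g)
  have hNM : N ≤ M := le_sup_right.trans hKM
  have hHM := hdense p hp hpm M hM
    (ne_zero_of_dvd_ne_zero hN_index (Subgroup.index_dvd_of_le hNM)) (hN_comm.trans hNM) hM_pow
  rw [H.mul_normal_eq_univ_iff M, sup_of_le_right (le_sup_left.trans hKM)] at hHM
  exact hM_ne_top hHM

/-- If `H` is dense in the pro-`Ab(p)` topology on a free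
group `F` for every prime `p` dividing `m`, then `H` is dense in the
pro-`Ab(m)` topology. -/
theorem abp_dense_imp_abm_dense (A : Type*) (m : ℕ) (hm : 1 ≤ m)
    (H : Subgroup (FreeGroup A))
    (hdense : ∀ p : ℕ, p.Prime → p ∣ m → AbmDense A p H) :
    AbmDense A m H :=
  abp_dense_imp_abm_dense_general A m H hdense
end

section
/- Let F be a free group (or any group) and H a subgroup. Then the closure of H in the pro-abelian topology on F equals the intersection over all primes p and all positive integers k of the closures of H in the pro-Ab(p^k) topologies. -/
/-- The pro-abelian topology on a group `G`: generated by the cosets of the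
normal subgroups `K` with `G/K` finite abelian. -/
def proAbTopology (G : Type*) [Group G] : TopologicalSpace G :=
  TopologicalSpace.generateFrom
    {S : Set G | ∃ K : Subgroup G, K.Normal ∧ K.index ≠ 0 ∧ commutator G ≤ K ∧
      ∃ g : G, S = (g * ·) '' (K : Set G)}

/-- The pro-`Ab(m)` topology on a group `G`: generated by the cosets of the
normal subgroups `K` with `G/K` finite abelian of exponent dividing `m`. -/
def proAbmTopology (G : Type*) [Group G] (m : ℕ) : TopologicalSpace G :=
  TopologicalSpace.generateFrom
    {S : Set G | ∃ K : Subgroup G, K.Normal ∧ K.index ≠ 0 ∧ commutator G ≤ K ∧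
      (∀ g : G, g ^ m ∈ K) ∧ ∃ g : G, S = (g * ·) '' (K : Set G)}

/-!
In a topology whose basic open sets are the cosets of a family of subgroups closed under `⊓`,
the closure of a subgroup `H` is `⋂ H ⊔ K` over the family. So take `K` with `F ⧸ K` finite
abelian, put `N = H ⊔ K` and `n = [F : N]`, and let `x` lie in every pro-`Ab(p^k)` closure of
`H`. For each prime `p`, the subgroup `{g | g ^ (n / p ^ v_p(n)) ∈ N}` contains `N` and its
quotient has exponent dividing `p ^ (v_p(n) + 1)`, so `x ^ (n / p ^ v_p(n)) ∈ N`. These exponents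
have no common prime factor, hence the order of `x` modulo `N` is `1`, that is `x ∈ H ⊔ K`.
-/

open Topology TopologicalSpace
open scoped Pointwise

theorem Nat.eq_one_of_forall_dvd_ordCompl {d n : ℕ} (hn : n ≠ 0)
    (h : ∀ p : ℕ, p.Prime → d ∣ ordCompl[p] n) : d = 1 := by
  by_contra hd
  obtain ⟨p, hp, hpd⟩ := Nat.exists_prime_and_dvd hd
  exact Nat.not_dvd_ordCompl hp hn (hpd.trans (h p hp))

section

variable {G : Type*} [Group G]

namespace Subgroup

theorem index_ne_zero_of_le {H K : Subgroup G} (h : H ≤ K) (hH : H.index ≠ 0) : K.index ≠ 0 :=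
  ne_zero_of_dvd_ne_zero hH (index_dvd_of_le h)

theorem mem_of_forall_pow_ordCompl_mem (N : Subgroup G) [N.Normal] {n : ℕ} (hn : n ≠ 0)
    {x : G} (h : ∀ p : ℕ, p.Prime → x ^ ordCompl[p] n ∈ N) : x ∈ N := by
  rw [← QuotientGroup.eq_one_iff, ← orderOf_eq_one_iff]
  refine Nat.eq_one_of_forall_dvd_ordCompl hn fun p hp => orderOf_dvd_of_pow_eq_one ?_
  rw [← QuotientGroup.mk_pow, QuotientGroup.eq_one_iff]
  exact h p hp

def powPreimage (N : Subgroup G) (hN : _root_.commutator G ≤ N) (r : ℕ) : Subgroup G where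
  carrier := {g | g ^ r ∈ N}
  one_mem' := by simp
  mul_mem' {a b} ha hb := by
    have := Normal.of_commutator_le G hN
    have hab : Commute (a : G ⧸ N) b :=
      (Normal.quotient_commutative_iff_commutator_le.mpr hN).is_comm.comm _ _
    simp only [Set.mem_ofPred_eq, ← QuotientGroup.eq_one_iff, QuotientGroup.mk_pow,
      QuotientGroup.mk_mul] at ha hb ⊢
    rw [hab.mul_pow, ha, hb, one_mul]
  inv_mem' {a} ha := by simpa [inv_pow] using N.inv_mem ha

theorem mem_powPreimage {N : Subgroup G} {hN : _root_.commutator G ≤ N} {r : ℕ} {g : G} :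
    g ∈ N.powPreimage hN r ↔ g ^ r ∈ N := Iff.rfl

theorem le_powPreimage (N : Subgroup G) (hN : _root_.commutator G ≤ N) (r : ℕ) :
    N ≤ N.powPreimage hN r := fun _ hg => N.pow_mem hg r

theorem leftCoset_inter_nonempty_iff_mem_sup (H K : Subgroup G) [K.Normal] (x : G) :
    (x • (K : Set G) ∩ H).Nonempty ↔ x ∈ H ⊔ K := by
  rw [mem_sup_of_normal_right]
  constructor
  · rintro ⟨_, ⟨k, hk, rfl⟩, hxk⟩
    exact ⟨x * k, hxk, k⁻¹, K.inv_mem hk, mul_inv_cancel_right x k⟩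
  · rintro ⟨h, hh, k, hk, rfl⟩
    exact ⟨h, ⟨k⁻¹, K.inv_mem hk, mul_inv_cancel_right h k⟩, hh⟩

end Subgroup

theorem leftCoset_eq_of_mem {K : Subgroup G} {g x : G} (hx : x ∈ g • (K : Set G)) :
    g • (K : Set G) = x • K :=
  (leftCoset_eq_iff K).mpr ((mem_leftCoset_iff g).mp hx)

def leftCosetsOf (P : Subgroup G → Prop) : Set (Set G) :=
  {S | ∃ K : Subgroup G, P K ∧ ∃ g : G, S = g • (K : Set G)}

theorem isTopologicalBasis_leftCosetsOf {P : Subgroup G → Prop} (htop : P ⊤)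
    (hinf : ∀ K₁ K₂, P K₁ → P K₂ → P (K₁ ⊓ K₂)) :
    IsTopologicalBasis (t := generateFrom (leftCosetsOf P)) (leftCosetsOf P) := by
  refine @IsTopologicalBasis.mk _ (generateFrom _) _ ?_
    (Set.eq_univ_of_forall fun x => ⟨_, ⟨⊤, htop, x, rfl⟩, mem_own_leftCoset _ x⟩) rfl
  rintro _ ⟨K₁, hK₁, g₁, rfl⟩ _ ⟨K₂, hK₂, g₂, rfl⟩ x ⟨hx₁, hx₂⟩
  refine ⟨x • ((K₁ ⊓ K₂ : Subgroup G) : Set G), ⟨_, hinf _ _ hK₁ hK₂, x, rfl⟩,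
    mem_own_leftCoset _ x, ?_⟩
  rw [leftCoset_eq_of_mem hx₁, leftCoset_eq_of_mem hx₂]
  exact Set.subset_inter (Set.smul_set_mono inf_le_left) (Set.smul_set_mono inf_le_right)

theorem mem_closure_generateFrom_leftCosetsOf_iff {P : Subgroup G → Prop} (htop : P ⊤)
    (hinf : ∀ K₁ K₂, P K₁ → P K₂ → P (K₁ ⊓ K₂)) {S : Set G} {x : G} :
    x ∈ closure[generateFrom (leftCosetsOf P)] S ↔
      ∀ K : Subgroup G, P K → (x • (K : Set G) ∩ S).Nonempty := by
  -- the basis lemma reads the topology from the instance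
  let _ := generateFrom (leftCosetsOf P)
  rw [(isTopologicalBasis_leftCosetsOf htop hinf).mem_closure_iff]
  constructor
  · exact fun h K hK => h _ ⟨K, hK, x, rfl⟩ (mem_own_leftCoset _ x)
  · rintro h _ ⟨K, hK, g, rfl⟩ hx
    rw [leftCoset_eq_of_mem hx]
    exact h K hK

theorem proAbmTopology_eq_generateFrom_leftCosetsOf (m : ℕ) :
    proAbmTopology G m = generateFrom (leftCosetsOf fun K =>
      K.Normal ∧ K.index ≠ 0 ∧ commutator G ≤ K ∧ ∀ g : G, g ^ m ∈ K) := by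
  simp only [proAbmTopology, leftCosetsOf, and_assoc]
  -- `g • (K : Set G)` unfolds to `(g * ·) '' K`
  rfl

theorem proAbTopology_eq_proAbmTopology_zero : proAbTopology G = proAbmTopology G 0 := by
  simp [proAbTopology, proAbmTopology]

theorem proAbmTopology_le_of_dvd {m m' : ℕ} (h : m ∣ m') :
    proAbmTopology G m' ≤ proAbmTopology G m := by
  refine generateFrom_anti ?_
  rintro _ ⟨K, hN, hi, hc, hm, g, rfl⟩
  obtain ⟨d, rfl⟩ := h
  exact ⟨K, hN, hi, hc, fun x => pow_mul x m d ▸ K.pow_mem (hm x) d, g, rfl⟩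

theorem mem_proAbmTopology_closure_iff {m : ℕ} {H : Subgroup G} {x : G} :
    x ∈ closure[proAbmTopology G m] (H : Set G) ↔
      ∀ K : Subgroup G, K.index ≠ 0 → commutator G ≤ K → (∀ g : G, g ^ m ∈ K) → x ∈ H ⊔ K := by
  rw [proAbmTopology_eq_generateFrom_leftCosetsOf, mem_closure_generateFrom_leftCosetsOf_iff]
  · refine forall_congr' fun K => ⟨fun h hi hc hm => ?_, fun h ⟨_, hi, hc, hm⟩ => ?_⟩
    · have := Subgroup.Normal.of_commutator_le G hc
      exact (Subgroup.leftCoset_inter_nonempty_iff_mem_sup H K x).mp (h ⟨this, hi, hc, hm⟩)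
    · exact (Subgroup.leftCoset_inter_nonempty_iff_mem_sup H K x).mpr (h hi hc hm)
  · exact ⟨inferInstance, by simp, le_top, fun g => Subgroup.mem_top _⟩
  · rintro K₁ K₂ ⟨_, hi₁, hc₁, hm₁⟩ ⟨_, hi₂, hc₂, hm₂⟩
    exact ⟨inferInstance, Subgroup.index_inf_ne_zero hi₁ hi₂, le_inf hc₁ hc₂,
      fun g => ⟨hm₁ g, hm₂ g⟩⟩

theorem pow_mem_of_mem_proAbmTopology_closure {H N : Subgroup G} (hHN : H ≤ N)
    (hNi : N.index ≠ 0) (hNc : commutator G ≤ N) {m r : ℕ} (hmr : ∀ g : G, g ^ (m * r) ∈ N)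
    {x : G} (hx : x ∈ closure[proAbmTopology G m] (H : Set G)) : x ^ r ∈ N := by
  have hle := N.le_powPreimage hNc r
  have hx' := mem_proAbmTopology_closure_iff.mp hx (N.powPreimage hNc r)
    (Subgroup.index_ne_zero_of_le hle hNi) (hNc.trans hle)
    fun g => Subgroup.mem_powPreimage.mpr (pow_mul g m r ▸ hmr g)
  rwa [sup_eq_right.mpr (hHN.trans hle)] at hx'

theorem mem_of_forall_mem_proAbpkTopology_closure {H N : Subgroup G} (hHN : H ≤ N)
    (hNi : N.index ≠ 0) (hNc : commutator G ≤ N) {x : G}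
    (hx : ∀ p : ℕ, p.Prime → ∀ k : ℕ, 1 ≤ k → x ∈ closure[proAbmTopology G (p ^ k)] (H : Set G)) :
    x ∈ N := by
  have := Subgroup.Normal.of_commutator_le G hNc
  refine N.mem_of_forall_pow_ordCompl_mem hNi fun p hp => ?_
  refine pow_mem_of_mem_proAbmTopology_closure hHN hNi hNc (fun g => ?_)
    (hx p hp (N.index.factorization p + 1) le_add_self)
  rw [pow_succ', mul_assoc, Nat.ordProj_mul_ordCompl_eq_self, mul_comm, pow_mul]
  exact N.pow_mem (N.pow_index_mem g) p

end

/-- For a subgroup `H` of a group `F`, the closure of `H` in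
the pro-abelian topology equals the intersection, over all primes `p` and all
positive integers `k`, of the closures of `H` in the pro-`Ab(p^k)`
topologies. -/
theorem proAb_closure_eq_iInter_proAbpk_closure (F : Type*) [Group F] (H : Subgroup F) :
    @closure F (proAbTopology F) (H : Set F) =
      ⋂ (p : ℕ) (_ : p.Prime) (k : ℕ) (_ : 1 ≤ k),
        @closure F (proAbmTopology F (p ^ k)) (H : Set F) := by
  refine subset_antisymm (Set.subset_iInter₂ fun p _ => Set.subset_iInter₂ fun k _ =>
    closure.mono (proAbTopology_eq_proAbmTopology_zero.trans_le
      (proAbmTopology_le_of_dvd (dvd_zero _)))) fun x hx => ?_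
  simp only [Set.mem_iInter] at hx
  rw [proAbTopology_eq_proAbmTopology_zero, mem_proAbmTopology_closure_iff]
  exact fun K hKi hKc _ => mem_of_forall_mem_proAbpkTopology_closure le_sup_left
    (Subgroup.index_ne_zero_of_le le_sup_right hKi) (hKc.trans le_sup_right) hx
end
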